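/- arXiv:2206.14896 — 2 statements merged into one kernel-verified Lean document; each statement's English description precedes it below -/
import Mathlib

section
/- Let α ∈ ℝ_{≥0}^d with α_1 ≥ ... ≥ α_d ≥ 0, and let r be the smallest index such that Σ_{i=1}^r α_i² ≥ (1/3)‖α‖_2². Suppose Σ_{i=1}^r α_i² ≤ (2/3)‖α‖_2² (so both α⁺ = (α_1,...,α_r) and α⁻ = (α_{r+1},...,α_d) carry at least a third of the ℓ² mass). Then (‖α⁻‖_2/‖α⁻‖_4)⁴ ≥ (1/9)·(‖α‖_2/‖α‖_3)⁶. -/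
/-!
Split `α` at `r` into the head `α⁺` and the tail `α⁻`. Every head entry dominates every tail
entry, so `α_i² α_j⁴ ≤ α_i³ α_j³` termwise, whence `‖α⁺‖₂² ‖α⁻‖₄⁴ ≤ ‖α⁺‖₃³ ‖α⁻‖₃³ ≤ ‖α‖₃⁶ / 4`
by AM-GM. Since both halves carry at least a third of `‖α‖₂²`, this gives
`‖α‖₂⁶ ‖α⁻‖₄⁴ ≤ 9 · (3/4) ‖α⁻‖₂⁴ ‖α‖₃⁶`.
-/

open Finset

theorem Finset.sum_sq_mul_sum_pow_four_le {ι : Type*} (s t : Finset ι) (f : ι → ℝ)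
    (hf : ∀ j ∈ t, 0 ≤ f j) (hst : ∀ i ∈ s, ∀ j ∈ t, f j ≤ f i) :
    (∑ i ∈ s, f i ^ 2) * ∑ j ∈ t, f j ^ 4 ≤ (∑ i ∈ s, f i ^ 3) * ∑ j ∈ t, f j ^ 3 := by
  simp only [sum_mul_sum]
  refine sum_le_sum fun i hi => sum_le_sum fun j hj => ?_
  have hterm : 0 ≤ f i ^ 2 * f j ^ 3 * (f i - f j) :=
    mul_nonneg (mul_nonneg (sq_nonneg _) (pow_nonneg (hf j hj) 3)) (sub_nonneg.2 (hst i hi j hj))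
  linarith [hterm]

theorem one_ninth_mul_cube_div_sq_le_sq_div {A B C S : ℝ} (hA : (A + B) / 3 ≤ A)
    (hB : (A + B) / 3 ≤ B) (hC : 0 ≤ C) (hBC : C = 0 → B = 0) (hS : 4 * (A * C) ≤ S ^ 2) :
    1 / 9 * (A + B) ^ 3 / S ^ 2 ≤ B ^ 2 / C := by
  rcases hC.eq_or_lt with rfl | hCpos
  · obtain rfl : A = 0 := by linarith [hBC rfl]
    simp [hBC rfl]
  rcases (sq_nonneg S).eq_or_lt with hS0 | hSpos
  · rw [← hS0, div_zero]
    positivity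
  rw [div_le_div_iff₀ hSpos hCpos]
  have hsum : 0 ≤ A + B := by linarith
  have hmass : (A + B) * C ≤ 3 / 4 * S ^ 2 := by nlinarith
  have hB2 : (A + B) ^ 2 ≤ 9 * B ^ 2 := by nlinarith
  calc 1 / 9 * (A + B) ^ 3 * C = 1 / 9 * (A + B) ^ 2 * ((A + B) * C) := by ring
    _ ≤ 1 / 9 * (9 * B ^ 2) * (3 / 4 * S ^ 2) := by gcongr
    _ ≤ B ^ 2 * S ^ 2 := by nlinarith [sq_nonneg B, sq_nonneg S]

theorem stmt_1_general (d r : ℕ) (α : ℕ → ℝ)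
    (hnonneg : ∀ i < d, 0 ≤ α i)
    (hmono : ∀ i j, i ≤ j → j < d → α j ≤ α i)
    (hrd : r < d)
    (hr : (1 / 3 : ℝ) * ∑ i ∈ Finset.range d, (α i) ^ 2 ≤ ∑ i ∈ Finset.range r, (α i) ^ 2)
    (hr2 : (∑ i ∈ Finset.range r, (α i) ^ 2) ≤ (2 / 3 : ℝ) * ∑ i ∈ Finset.range d, (α i) ^ 2) :
    (1 / 9 : ℝ) * (∑ i ∈ Finset.range d, (α i) ^ 2) ^ 3 / (∑ i ∈ Finset.range d, (α i) ^ 3) ^ 2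
      ≤ (∑ j ∈ Finset.Ico r d, (α j) ^ 2) ^ 2 / (∑ j ∈ Finset.Ico r d, (α j) ^ 4) := by
  rw [← sum_range_add_sum_Ico _ hrd.le] at hr hr2 ⊢
  rw [← sum_range_add_sum_Ico _ hrd.le]
  have hhead_tail : (∑ i ∈ range r, α i ^ 2) * ∑ j ∈ Ico r d, α j ^ 4
      ≤ (∑ i ∈ range r, α i ^ 3) * ∑ j ∈ Ico r d, α j ^ 3 :=
    sum_sq_mul_sum_pow_four_le _ _ α (fun j hj => hnonneg j (mem_Ico.1 hj).2)
      fun i hi j hj => hmono i j ((mem_range.1 hi).le.trans (mem_Ico.1 hj).1) (mem_Ico.1 hj).2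
  have htail_sq : ∑ j ∈ Ico r d, α j ^ 4 = 0 → ∑ j ∈ Ico r d, α j ^ 2 = 0 := fun hC => by
    have hCS := sq_sum_le_card_mul_sum_sq (s := Ico r d) (f := fun j => α j ^ 2)
    simp only [← pow_mul, hC, mul_zero] at hCS
    exact pow_eq_zero_iff two_ne_zero |>.1 (le_antisymm hCS (sq_nonneg _))
  exact one_ninth_mul_cube_div_sq_le_sq_div (by linarith) (by linarith)
    (sum_nonneg fun j _ => by positivity) htail_sq
    (by grw [hhead_tail, ← mul_assoc]; exact four_mul_le_sq_add _ _)

/-- If `α` is nonnegative and decreasing, and `r` is the smallest index such that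
the first `r` squared coordinates carry at least a third of the squared ℓ² mass,
and they carry at most two thirds of it, then
`(‖α⁻‖₂/‖α⁻‖₄)⁴ ≥ (1/9) (‖α‖₂/‖α‖₃)⁶`, written here without roots as
`‖α⁻‖₂⁴/‖α⁻‖₄⁴ ≥ (1/9) ‖α‖₂⁶/‖α‖₃⁶`. -/
theorem stmt_1 (d r : ℕ) (α : ℕ → ℝ)
    (hnonneg : ∀ i < d, 0 ≤ α i)
    (hmono : ∀ i j, i ≤ j → j < d → α j ≤ α i)
    (hrd : r < d)
    (hr : (1 / 3 : ℝ) * ∑ i ∈ Finset.range d, (α i) ^ 2 ≤ ∑ i ∈ Finset.range r, (α i) ^ 2)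
    (hrmin : ∀ s < r,
      (∑ i ∈ Finset.range s, (α i) ^ 2) < (1 / 3 : ℝ) * ∑ i ∈ Finset.range d, (α i) ^ 2)
    (hr2 : (∑ i ∈ Finset.range r, (α i) ^ 2) ≤ (2 / 3 : ℝ) * ∑ i ∈ Finset.range d, (α i) ^ 2) :
    (1 / 9 : ℝ) * (∑ i ∈ Finset.range d, (α i) ^ 2) ^ 3 / (∑ i ∈ Finset.range d, (α i) ^ 3) ^ 2
      ≤ (∑ j ∈ Finset.Ico r d, (α j) ^ 2) ^ 2 / (∑ j ∈ Finset.Ico r d, (α j) ^ 4) :=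
  stmt_1_general d r α hnonneg hmono hrd hr hr2
end

section
/- Let u ∈ (0,1) and g, h ∈ ℝⁿ. Let M(n) be the law of a symmetric n×n random matrix with zero diagonal and i.i.d. N(0,1) entries above the diagonal, and let M(n,u,g) be the law of u·Δ(g) + √(1-u²)·M′ with M′ ∼ M(n), where Δ(g) = gg^T - diag(gg^T). Then E_{A∼M(n)} [ (dM(n,u,g)/dM(n))(A) · (dM(n,u,h)/dM(n))(A) ] = (1-u⁴)^{-n(n-1)/4} · exp( (u²/(1-u⁴)) Σ_{i<j} g_i g_j h_i h_j − (u⁴/(2(1-u⁴))) Σ_{i<j} (g_i²g_j² + h_i²h_j²) ). -/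
open MeasureTheory ProbabilityTheory

/-- The law `M(n)` of a symmetric Gaussian matrix with zero diagonal, encoded by
its strictly-upper-diagonal entries: the product of standard Gaussians over
pairs `i < j`. -/
noncomputable def gaussMatrixLaw (n : ℕ) :
    Measure ({p : Fin n × Fin n // p.1 < p.2} → ℝ) :=
  Measure.pi fun _ => gaussianReal 0 1

/-- The law `M(n,u,g)` of `u Δ(g) + √(1-u²) M'`, `M' ∼ M(n)`, encoded by its
strictly-upper-diagonal entries: entry `(i,j)` is `N(u gᵢ gⱼ, 1 - u²)`. -/
noncomputable def spikedGaussMatrixLaw (n : ℕ) (u : ℝ) (g : Fin n → ℝ) :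
    Measure ({p : Fin n × Fin n // p.1 < p.2} → ℝ) :=
  Measure.pi fun p => gaussianReal (u * g p.1.1 * g p.1.2) ((1 - u ^ 2).toNNReal)

open Real
open scoped ENNReal NNReal

/-!
Under `M(n)` the entries indexed by pairs `i < j` are independent, so both likelihood ratios
factor over pairs and the expectation of their product is a product of one-dimensional Gaussian
integrals. Writing `φ(m, v)` for the density of `N(m, v)`, completing the square shows that
`φ(ua, 1-u²) φ(ub, 1-u²) / φ(0, 1)` is
`(1-u⁴)^{-1/2} exp(u²ab/(1-u⁴) - u⁴(a²+b²)/(2(1-u⁴)))` times the density of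
`N(u(a+b)/(1+u²), (1-u²)/(1+u²))`, which integrates to one.
-/

namespace MeasureTheory

variable {ι : Type*} [Fintype ι]

theorem lintegral_fin_nat_prod_eq_prod {n : ℕ} {E : Fin n → Type*}
    [∀ i, MeasurableSpace (E i)]
    {μ : ∀ i, Measure (E i)} [∀ i, SigmaFinite (μ i)] {f : ∀ i, E i → ℝ≥0∞}
    (hf : ∀ i, Measurable (f i)) :
    ∫⁻ x, ∏ i, f i (x i) ∂Measure.pi μ = ∏ i, ∫⁻ y, f i y ∂μ i := by
  induction n with
  | zero => simp
  | succ n ih =>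
      have hmeas : Measurable fun z : (j : Fin n) → E (Fin.succAbove 0 j) ↦
          ∏ j, f (Fin.succAbove 0 j) (z j) :=
        Finset.measurable_prod _ fun j _ ↦ (hf _).comp (measurable_pi_apply j)
      calc
        _ = ∫⁻ x : E 0 × ((j : Fin n) → E (Fin.succAbove 0 j)),
              f 0 x.1 * ∏ j, f (Fin.succAbove 0 j) (x.2 j)
              ∂(μ 0).prod (Measure.pi fun j ↦ μ (Fin.succAbove 0 j)) := by
          rw [← (measurePreserving_piFinSuccAbove μ 0).lintegral_comp
            (f := fun x ↦ f 0 x.1 * ∏ j, f (Fin.succAbove 0 j) (x.2 j))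
            (((hf 0).comp measurable_fst).mul (hmeas.comp measurable_snd))]
          congr 1 with x
          rw [Fin.prod_univ_succAbove _ 0]
          rfl
        _ = (∫⁻ x, f 0 x ∂μ 0)
              * ∏ j, ∫⁻ x, f (Fin.succAbove 0 j) x ∂μ (Fin.succAbove 0 j) := by
          rw [lintegral_prod_mul (f := f 0) (hf 0).aemeasurable hmeas.aemeasurable,
            ih fun j ↦ hf _]
        _ = ∏ i, ∫⁻ x, f i x ∂μ i :=
          (Fin.prod_univ_succAbove (fun i ↦ ∫⁻ x, f i x ∂μ i) 0).symm

theorem lintegral_fintype_prod_eq_prod {E : ι → Type*} [∀ i, MeasurableSpace (E i)]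
    {μ : ∀ i, Measure (E i)} [∀ i, SigmaFinite (μ i)] {f : ∀ i, E i → ℝ≥0∞}
    (hf : ∀ i, Measurable (f i)) :
    ∫⁻ x, ∏ i, f i (x i) ∂Measure.pi μ = ∏ i, ∫⁻ y, f i y ∂μ i := by
  let e := (Fintype.equivFin ι).symm
  rw [← (measurePreserving_piCongrLeft μ e).lintegral_comp_emb
    (MeasurableEquiv.measurableEmbedding _)]
  simp_rw [← e.prod_comp, MeasurableEquiv.coe_piCongrLeft, Equiv.piCongrLeft_apply_apply]
  exact lintegral_fin_nat_prod_eq_prod fun i ↦ hf _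

theorem Measure.pi_withDensity {E : ι → Type*} [∀ i, MeasurableSpace (E i)]
    {μ : ∀ i, Measure (E i)} [∀ i, SigmaFinite (μ i)] {f : ∀ i, E i → ℝ≥0∞}
    (hf : ∀ i, Measurable (f i)) [∀ i, SigmaFinite ((μ i).withDensity (f i))] :
    Measure.pi (fun i ↦ (μ i).withDensity (f i))
      = (Measure.pi μ).withDensity fun x ↦ ∏ i, f i (x i) := by
  refine Measure.pi_eq fun s hs ↦ ?_
  have hbox : (Set.univ.pi s).indicator (fun x ↦ ∏ i, f i (x i))
      = fun x ↦ ∏ i, (s i).indicator (f i) (x i) := by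
    ext x
    by_cases hx : x ∈ Set.univ.pi s
    · rw [Set.indicator_of_mem hx]
      exact Finset.prod_congr rfl fun i _ ↦ (Set.indicator_of_mem (hx i trivial) _).symm
    · obtain ⟨i, -, hi⟩ := not_forall₂.mp hx
      rw [Set.indicator_of_notMem hx, Finset.prod_eq_zero (Finset.mem_univ i)
        (Set.indicator_of_notMem hi _)]
  rw [withDensity_apply _ (.univ_pi hs), ← lintegral_indicator (.univ_pi hs), hbox,
    lintegral_fintype_prod_eq_prod fun i ↦ (hf i).indicator (hs i)]
  simp_rw [lintegral_indicator (hs _), withDensity_apply _ (hs _)]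

end MeasureTheory

namespace ProbabilityTheory

noncomputable def gaussianLikelihoodRatio (m : ℝ) (v : ℝ≥0) (x : ℝ) : ℝ :=
  gaussianPDFReal m v x / gaussianPDFReal 0 1 x

lemma gaussianLikelihoodRatio_nonneg (m : ℝ) (v : ℝ≥0) (x : ℝ) :
    0 ≤ gaussianLikelihoodRatio m v x :=
  div_nonneg (gaussianPDFReal_nonneg _ _ _) (gaussianPDFReal_nonneg _ _ _)

lemma measurable_gaussianLikelihoodRatio (m : ℝ) (v : ℝ≥0) :
    Measurable (gaussianLikelihoodRatio m v) :=
  (measurable_gaussianPDFReal m v).div (measurable_gaussianPDFReal 0 1)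

lemma gaussianReal_eq_withDensity_gaussianLikelihoodRatio (m : ℝ) {v : ℝ≥0} (hv : v ≠ 0) :
    gaussianReal m v = (gaussianReal 0 1).withDensity
      fun x ↦ ENNReal.ofReal (gaussianLikelihoodRatio m v x) := by
  rw [gaussianReal_of_var_ne_zero _ hv, gaussianReal_of_var_ne_zero 0 one_ne_zero,
    ← withDensity_mul _ (measurable_gaussianPDF 0 1)
      (measurable_gaussianLikelihoodRatio m v).ennreal_ofReal]
  congr 1 with x
  rw [Pi.mul_apply, gaussianPDF, gaussianPDF, ← ENNReal.ofReal_mul (gaussianPDFReal_nonneg _ _ _),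
    gaussianLikelihoodRatio, mul_div_cancel₀ _ (gaussianPDFReal_pos _ _ _ one_ne_zero).ne']

lemma gaussianPDFReal_mul_gaussianPDFReal_div_gaussianPDFReal {u : ℝ} (hu : u ^ 2 < 1)
    (a b x : ℝ) :
    gaussianPDFReal (u * a) (1 - u ^ 2).toNNReal x * gaussianPDFReal (u * b) (1 - u ^ 2).toNNReal x
        / gaussianPDFReal 0 1 x
      = (1 - u ^ 4) ^ (-(1 : ℝ) / 2) * exp (u ^ 2 / (1 - u ^ 4) * (a * b)
          - u ^ 4 / (2 * (1 - u ^ 4)) * (a ^ 2 + b ^ 2))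
        * gaussianPDFReal (u * (a + b) / (1 + u ^ 2)) ((1 - u ^ 2) / (1 + u ^ 2)).toNNReal x := by
  have hv : 0 < 1 - u ^ 2 := by linarith
  have hw : 0 < 1 + u ^ 2 := by positivity
  have hconst : (1 - u ^ 4) ^ (-(1 : ℝ) / 2) * (√(2 * π * ((1 - u ^ 2) / (1 + u ^ 2))))⁻¹
      = (√(2 * π * (1 - u ^ 2)))⁻¹ * (√(2 * π * (1 - u ^ 2)))⁻¹
          / (√(2 * π))⁻¹ := by
    rw [show 1 - u ^ 4 = (1 - u ^ 2) * (1 + u ^ 2) by ring, neg_div, rpow_neg (by positivity),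
      ← sqrt_eq_rpow, sqrt_mul hv.le, sqrt_mul (by positivity), sqrt_mul (by positivity),
      sqrt_div hv.le]
    field_simp
    rw [sq_sqrt (by positivity), sq_sqrt zero_le_two, sq_sqrt pi_pos.le, sq_sqrt hv.le]
  have hexp : exp (-(x - u * a) ^ 2 / (2 * (1 - u ^ 2)))
        * exp (-(x - u * b) ^ 2 / (2 * (1 - u ^ 2))) / exp (-x ^ 2 / 2)
      = exp (u ^ 2 / (1 - u ^ 4) * (a * b) - u ^ 4 / (2 * (1 - u ^ 4)) * (a ^ 2 + b ^ 2))
        * exp (-(x - u * (a + b) / (1 + u ^ 2)) ^ 2 / (2 * ((1 - u ^ 2) / (1 + u ^ 2)))) := by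
    rw [← exp_add, ← exp_sub, ← exp_add]
    congr 1
    rw [show 1 - u ^ 4 = (1 - u ^ 2) * (1 + u ^ 2) by ring]
    field_simp
    ring
  simp only [gaussianPDFReal, Real.coe_toNNReal _ hv.le, Real.coe_toNNReal _ (div_pos hv hw).le,
    NNReal.coe_one, mul_one, sub_zero]
  calc _ = (√(2 * π * (1 - u ^ 2)))⁻¹ * (√(2 * π * (1 - u ^ 2)))⁻¹ / (√(2 * π))⁻¹
        * (exp (-(x - u * a) ^ 2 / (2 * (1 - u ^ 2))) * exp (-(x - u * b) ^ 2 / (2 * (1 - u ^ 2)))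
          / exp (-x ^ 2 / 2)) := by ring
    _ = _ := by rw [← hconst, hexp]; ring

lemma integral_gaussianLikelihoodRatio_mul {u : ℝ} (hu : u ^ 2 < 1) (a b : ℝ) :
    ∫ x, gaussianLikelihoodRatio (u * a) (1 - u ^ 2).toNNReal x
        * gaussianLikelihoodRatio (u * b) (1 - u ^ 2).toNNReal x ∂gaussianReal 0 1
      = (1 - u ^ 4) ^ (-(1 : ℝ) / 2) * exp (u ^ 2 / (1 - u ^ 4) * (a * b)
          - u ^ 4 / (2 * (1 - u ^ 4)) * (a ^ 2 + b ^ 2)) := by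
  have hw : ((1 - u ^ 2) / (1 + u ^ 2)).toNNReal ≠ 0 := by
    rw [ne_eq, Real.toNNReal_eq_zero, not_le]
    exact div_pos (by linarith) (by positivity)
  have hdensity (x : ℝ) : gaussianPDFReal 0 1 x
        • (gaussianLikelihoodRatio (u * a) (1 - u ^ 2).toNNReal x
          * gaussianLikelihoodRatio (u * b) (1 - u ^ 2).toNNReal x)
      = (1 - u ^ 4) ^ (-(1 : ℝ) / 2) * exp (u ^ 2 / (1 - u ^ 4) * (a * b)
          - u ^ 4 / (2 * (1 - u ^ 4)) * (a ^ 2 + b ^ 2))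
        * gaussianPDFReal (u * (a + b) / (1 + u ^ 2)) ((1 - u ^ 2) / (1 + u ^ 2)).toNNReal x := by
    have hφ := (gaussianPDFReal_pos 0 1 x one_ne_zero).ne'
    rw [← gaussianPDFReal_mul_gaussianPDFReal_div_gaussianPDFReal hu, gaussianLikelihoodRatio,
      gaussianLikelihoodRatio, smul_eq_mul]
    field_simp
  rw [integral_gaussianReal_eq_integral_smul one_ne_zero, integral_congr_ae (ae_of_all _ hdensity),
    integral_const_mul, integral_gaussianPDFReal_eq_one _ hw, mul_one]

end ProbabilityTheory

lemma Fintype.card_subtype_fst_lt_snd (α : Type*) [Fintype α] [LinearOrder α] :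
    Fintype.card {p : α × α // p.1 < p.2} = (Fintype.card α).choose 2 := by
  rw [Fintype.card_subtype, Fintype.card_product_filter_lt]

instance isProbabilityMeasure_gaussMatrixLaw (n : ℕ) :
    IsProbabilityMeasure (gaussMatrixLaw n) := by
  rw [gaussMatrixLaw]
  infer_instance

lemma spikedGaussMatrixLaw_eq_withDensity (n : ℕ) {u : ℝ} (hu : u ^ 2 < 1) (g : Fin n → ℝ) :
    spikedGaussMatrixLaw n u g = (gaussMatrixLaw n).withDensity fun A ↦
      ∏ p, ENNReal.ofReal
        (gaussianLikelihoodRatio (u * g p.1.1 * g p.1.2) (1 - u ^ 2).toNNReal (A p)) := by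
  have hv : (1 - u ^ 2).toNNReal ≠ 0 := by
    rw [ne_eq, Real.toNNReal_eq_zero, not_le]
    linarith
  simp_rw [spikedGaussMatrixLaw, gaussMatrixLaw,
    gaussianReal_eq_withDensity_gaussianLikelihoodRatio _ hv]
  exact Measure.pi_withDensity fun p ↦ (measurable_gaussianLikelihoodRatio _ _).ennreal_ofReal

lemma toReal_rnDeriv_spikedGaussMatrixLaw (n : ℕ) {u : ℝ} (hu : u ^ 2 < 1) (g : Fin n → ℝ) :
    (fun A ↦ ((spikedGaussMatrixLaw n u g).rnDeriv (gaussMatrixLaw n) A).toReal)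
      =ᵐ[gaussMatrixLaw n] fun A ↦
        ∏ p, gaussianLikelihoodRatio (u * g p.1.1 * g p.1.2) (1 - u ^ 2).toNNReal (A p) := by
  have hmeas : Measurable fun A : {p : Fin n × Fin n // p.1 < p.2} → ℝ ↦
      ∏ p, ENNReal.ofReal
        (gaussianLikelihoodRatio (u * g p.1.1 * g p.1.2) (1 - u ^ 2).toNNReal (A p)) :=
    Finset.measurable_prod _ fun p _ ↦
      ((measurable_gaussianLikelihoodRatio _ _).comp (measurable_pi_apply p)).ennreal_ofReal
  rw [spikedGaussMatrixLaw_eq_withDensity n hu]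
  filter_upwards [Measure.rnDeriv_withDensity (gaussMatrixLaw n) hmeas] with A hA
  rw [hA, ENNReal.toReal_prod]
  exact Finset.prod_congr rfl fun p _ ↦
    ENNReal.toReal_ofReal (gaussianLikelihoodRatio_nonneg _ _ _)

/-- The Ingster–Suslina inner product of likelihood ratios for rank-one spiked
Gaussian matrices:
`E_{A∼M(n)} (dM(n,u,g)/dM(n))(A) (dM(n,u,h)/dM(n))(A)
  = (1-u⁴)^{-n(n-1)/4} exp((u²/(1-u⁴)) Σ_{i<j} gᵢgⱼhᵢhⱼ
      − (u⁴/(2(1-u⁴))) Σ_{i<j} (gᵢ²gⱼ² + hᵢ²hⱼ²))`. -/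
theorem stmt_5 (n : ℕ) (u : ℝ) (hu0 : 0 < u) (hu1 : u < 1) (g h : Fin n → ℝ) :
    (∫ A, ((spikedGaussMatrixLaw n u g).rnDeriv (gaussMatrixLaw n) A).toReal
        * ((spikedGaussMatrixLaw n u h).rnDeriv (gaussMatrixLaw n) A).toReal
        ∂(gaussMatrixLaw n))
      = (1 - u ^ 4) ^ (-(n * (n - 1) : ℝ) / 4)
        * Real.exp (u ^ 2 / (1 - u ^ 4)
              * ∑ p : {p : Fin n × Fin n // p.1 < p.2},
                  g p.1.1 * g p.1.2 * h p.1.1 * h p.1.2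
            - u ^ 4 / (2 * (1 - u ^ 4))
              * ∑ p : {p : Fin n × Fin n // p.1 < p.2},
                  ((g p.1.1) ^ 2 * (g p.1.2) ^ 2 + (h p.1.1) ^ 2 * (h p.1.2) ^ 2)) := by
  have hu : u ^ 2 < 1 := by nlinarith
  let r (f : Fin n → ℝ) (p : {p : Fin n × Fin n // p.1 < p.2}) : ℝ → ℝ :=
    gaussianLikelihoodRatio (u * f p.1.1 * f p.1.2) (1 - u ^ 2).toNNReal
  calc
    _ = ∫ A, ∏ p, r g p (A p) * r h p (A p) ∂gaussMatrixLaw n := by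
      refine integral_congr_ae ?_
      filter_upwards [toReal_rnDeriv_spikedGaussMatrixLaw n hu g,
        toReal_rnDeriv_spikedGaussMatrixLaw n hu h] with A hg hh
      rw [hg, hh, Finset.prod_mul_distrib]
    _ = ∏ p, ∫ x, r g p x * r h p x ∂gaussianReal 0 1 :=
      integral_fintype_prod_eq_prod fun p x ↦ r g p x * r h p x
    _ = ∏ p : {p : Fin n × Fin n // p.1 < p.2}, (1 - u ^ 4) ^ (-(1 : ℝ) / 2)
          * exp (u ^ 2 / (1 - u ^ 4) * (g p.1.1 * g p.1.2 * (h p.1.1 * h p.1.2))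
            - u ^ 4 / (2 * (1 - u ^ 4)) * ((g p.1.1 * g p.1.2) ^ 2 + (h p.1.1 * h p.1.2) ^ 2)) := by
      simp_rw [r, mul_assoc u, integral_gaussianLikelihoodRatio_mul hu]
    _ = _ := by
      rw [Finset.prod_mul_distrib, Finset.prod_const, ← exp_sum, Finset.card_univ,
        ← rpow_mul_natCast (by nlinarith), Fintype.card_subtype_fst_lt_snd,
        Fintype.card_fin, Nat.cast_choose_two, Finset.sum_sub_distrib,
        ← Finset.mul_sum, ← Finset.mul_sum]
      congr 2
      · ring
      · congr 2 <;> exact Finset.sum_congr rfl fun p _ ↦ by ring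
end
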